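/- arXiv:2105.11369 — 2 statements merged into one kernel-verified Lean document; each statement's English description precedes it below -/
import Mathlib

section
/- Let Σ* := {v ∈ ℝ^U : Λ(v) is positive semidefinite}. Let e, t ∈ ℝ^U and let c, c* ∈ ℝ with c < c*. Suppose there are constants k₁, k₂, k₃ > 0 such that: (i) eᵀv ≥ k₁·‖v‖_∞ for every v ∈ Σ*; (ii) tr(Λ(w)·Λ(w)) ≥ k₂²·‖w‖² for every w ∈ ℝ^U; (iii) every eigenvalue of Λ(v) is at most k₃·‖v‖_∞ for every v ∈ Σ*. Suppose further that (t − c*·e)ᵀv ≥ 0 for every v ∈ Σ*, and that y ∈ ℝ^U satisfies Λ(y) positive definite and −g(y) = t − c·e. Then (c* − c)·k₁·k₂·‖e‖*_y ≤ k₃·L·‖e‖, where ‖·‖ and ‖·‖_∞ denote the Euclidean and maximum norms on ℝ^U. -/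
/-!
At the point `y` the gradient equation gives `(t - c e)ᵀ y = tr (Λ(y)⁻¹ Λ(y)) = L`; together with
`(t - c* e)ᵀ y ≥ 0` and (i) this yields `(c* - c) k₁ ‖y‖_∞ ≤ L`. By (iii), `Λ(y) ⪯ m I` with
`m = k₃ ‖y‖_∞`, hence `Λ(y)⁻¹ ⪰ m⁻¹ I`, and then `vᵀ H(y) v = tr (Λ(y)⁻¹ Λ(v) Λ(y)⁻¹ Λ(v))` is at
least `m⁻² tr (Λ(v)²) ≥ (k₂ / m)² ‖v‖²` by (ii). Inverting this bound on `H(y)` gives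
`‖e‖*_y ≤ (m / k₂) ‖e‖`, and multiplying the two estimates proves the claim.
-/

open Matrix

/-- The gradient of the barrier `f(x) = -log det Λ(x)`:
`g(x)_i = -tr(Λ(x)⁻¹ · Λ(e_i))` (with the total matrix inverse, `0` for singular matrices). -/
noncomputable def grad {U L : ℕ} (Lam : (Fin U → ℝ) →ₗ[ℝ] Matrix (Fin L) (Fin L) ℝ)
    (x : Fin U → ℝ) : Fin U → ℝ :=
  fun i => -((Lam x)⁻¹ * Lam (Pi.single i 1)).trace

/-- The Hessian of the barrier: `H(x)_{ij} = tr(Λ(x)⁻¹ Λ(e_i) Λ(x)⁻¹ Λ(e_j))`. -/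
noncomputable def hess {U L : ℕ} (Lam : (Fin U → ℝ) →ₗ[ℝ] Matrix (Fin L) (Fin L) ℝ)
    (x : Fin U → ℝ) : Matrix (Fin U) (Fin U) ℝ :=
  Matrix.of fun i j =>
    ((Lam x)⁻¹ * Lam (Pi.single i 1) * (Lam x)⁻¹ * Lam (Pi.single j 1)).trace

/-- The local norm `‖v‖_x = (vᵀ H(x) v)^{1/2}`. -/
noncomputable def locNorm {U L : ℕ} (Lam : (Fin U → ℝ) →ₗ[ℝ] Matrix (Fin L) (Fin L) ℝ)
    (x v : Fin U → ℝ) : ℝ :=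
  Real.sqrt (v ⬝ᵥ (hess Lam x).mulVec v)

/-- The dual local norm `‖t‖*_x = (tᵀ H(x)⁻¹ t)^{1/2}`. -/
noncomputable def dualNorm {U L : ℕ} (Lam : (Fin U → ℝ) →ₗ[ℝ] Matrix (Fin L) (Fin L) ℝ)
    (x t : Fin U → ℝ) : ℝ :=
  Real.sqrt (t ⬝ᵥ (hess Lam x)⁻¹.mulVec t)

namespace Matrix

variable {n : Type*} [Fintype n] [DecidableEq n]

open scoped MatrixOrder in
theorem PosDef.inv_sub_smul_one_posSemidef {A : Matrix n n ℝ} (hA : A.PosDef) {m : ℝ}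
    (h : ∀ μ ∈ spectrum ℝ A, μ ≤ m) : (A⁻¹ - m⁻¹ • 1).PosSemidef := by
  rw [← le_iff, ← Algebra.algebraMap_eq_smul_one]
  refine algebraMap_le_of_le_spectrum (fun x hx => ?_) hA.inv.isHermitian.isSelfAdjoint
  have hx0 : 0 < x := hA.inv.isStrictlyPositive.spectrum_pos hx
  rw [← hA.isUnit.unit_spec, ← coe_units_inv, ← spectrum.inv₀_mem_iff] at hx
  exact inv_le_of_inv_le₀ hx0 (h _ hx)

open scoped MatrixOrder in
theorem PosSemidef.smul_trace_le_trace_mul {S X : Matrix n n ℝ} {a : ℝ}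
    (hS : (S - a • 1).PosSemidef) (hX : X.PosSemidef) : a * X.trace ≤ (S * X).trace := by
  obtain ⟨C, rfl⟩ := CStarAlgebra.nonneg_iff_eq_star_mul_self.mp hX.nonneg
  have h := (hS.mul_mul_conjTranspose_same C).trace_nonneg
  rw [mul_sub, sub_mul, trace_sub, mul_smul_comm, smul_mul_assoc, trace_smul, mul_one,
    trace_mul_cycle, trace_mul_comm C, smul_eq_mul, sub_nonneg] at h
  rwa [star_eq_conjTranspose, trace_mul_comm S]

theorem PosDef.inv_sq_mul_trace_mul_self_le {A B : Matrix n n ℝ} (hA : A.PosDef) {m : ℝ}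
    (hm : 0 ≤ m) (hAm : ∀ μ ∈ spectrum ℝ A, μ ≤ m) (hB : B.IsHermitian) :
    m⁻¹ ^ 2 * (B * B).trace ≤ (A⁻¹ * B * A⁻¹ * B).trace := by
  have hS := hA.inv_sub_smul_one_posSemidef hAm
  have hBB : (B * B).PosSemidef := by
    simpa only [hB.eq] using posSemidef_conjTranspose_mul_self B
  have hBSB : (B * A⁻¹ * B).PosSemidef := by
    simpa only [hB.eq] using hA.inv.posSemidef.conjTranspose_mul_mul_same B
  calc m⁻¹ ^ 2 * (B * B).trace = m⁻¹ * (m⁻¹ * (B * B).trace) := by ring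
    _ ≤ m⁻¹ * (A⁻¹ * (B * B)).trace :=
        mul_le_mul_of_nonneg_left (hS.smul_trace_le_trace_mul hBB) (inv_nonneg.mpr hm)
    _ = m⁻¹ * (B * A⁻¹ * B).trace := by rw [← mul_assoc, trace_mul_cycle]
    _ ≤ (A⁻¹ * (B * A⁻¹ * B)).trace := hS.smul_trace_le_trace_mul hBSB
    _ = (A⁻¹ * B * A⁻¹ * B).trace := by simp only [mul_assoc]

theorem mul_sqrt_dotProduct_inv_mulVec_le {H : Matrix n n ℝ} {a : ℝ} (ha : 0 ≤ a)
    (hH : ∀ v, a ^ 2 * (v ⬝ᵥ v) ≤ v ⬝ᵥ H *ᵥ v) (e : n → ℝ) :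
    a * √(e ⬝ᵥ H⁻¹ *ᵥ e) ≤ √(e ⬝ᵥ e) := by
  suffices a ^ 2 * (e ⬝ᵥ H⁻¹ *ᵥ e) ≤ e ⬝ᵥ e by
    calc a * √(e ⬝ᵥ H⁻¹ *ᵥ e) = √(a ^ 2 * (e ⬝ᵥ H⁻¹ *ᵥ e)) := by
          rw [Real.sqrt_mul (sq_nonneg a), Real.sqrt_sq ha]
      _ ≤ √(e ⬝ᵥ e) := Real.sqrt_le_sqrt this
  by_cases hH₀ : IsUnit H.det
  · set u := H⁻¹ *ᵥ e
    -- `a² ‖u‖² ≤ eᵀu` and `0 ≤ ‖e - a² u‖²` together bound `a² eᵀu = a² eᵀH⁻¹e`.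
    have hu : H *ᵥ u = e := by rw [mulVec_mulVec, mul_nonsing_inv _ hH₀, one_mulVec]
    have hHu := hH u
    rw [hu, dotProduct_comm u e] at hHu
    have hsq := dotProduct_self_star_nonneg (e - a ^ 2 • u)
    simp only [star_trivial, sub_dotProduct, dotProduct_sub, smul_dotProduct, dotProduct_smul,
      smul_eq_mul, dotProduct_comm u e] at hsq
    nlinarith [mul_le_mul_of_nonneg_left hHu (sq_nonneg a)]
  · -- `H⁻¹ = 0` for singular `H`.
    rw [nonsing_inv_apply_not_isUnit _ hH₀, zero_mulVec, dotProduct_zero, mul_zero]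
    exact dotProduct_self_star_nonneg e

end Matrix

theorem dotProduct_hess_mulVec {U L : ℕ} (Lam : (Fin U → ℝ) →ₗ[ℝ] Matrix (Fin L) (Fin L) ℝ)
    (x v w : Fin U → ℝ) :
    v ⬝ᵥ hess Lam x *ᵥ w = ((Lam x)⁻¹ * Lam v * (Lam x)⁻¹ * Lam w).trace := by
  set S := (Lam x)⁻¹
  let β : (Fin U → ℝ) →ₗ[ℝ] (Fin U → ℝ) →ₗ[ℝ] ℝ :=
    LinearMap.mk₂ ℝ (fun v w => (S * Lam v * S * Lam w).trace)
      (by intros; simp only [map_add, mul_add, add_mul, trace_add])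
      (by intros; simp only [map_smul, mul_smul_comm, smul_mul_assoc, trace_smul])
      (by intros; simp only [map_add, mul_add, trace_add])
      (by intros; simp only [map_smul, mul_smul_comm, trace_smul])
  have hβ : hess Lam x = LinearMap.toMatrix₂' ℝ β := by ext; rfl
  rw [hβ, ← Matrix.toLinearMap₂'_apply', Matrix.toLinearMap₂'_toMatrix']
  rfl

theorem neg_grad_dotProduct {U L : ℕ} (Lam : (Fin U → ℝ) →ₗ[ℝ] Matrix (Fin L) (Fin L) ℝ)
    (x v : Fin U → ℝ) : -grad Lam x ⬝ᵥ v = ((Lam x)⁻¹ * Lam v).trace := by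
  conv_rhs => rw [← Finset.univ_sum_single v]
  simp only [grad, dotProduct, Pi.neg_apply, neg_neg, map_sum, Matrix.mul_sum, trace_sum]
  refine Finset.sum_congr rfl fun i _ => ?_
  rw [show Pi.single i (v i) = v i • Pi.single i (1 : ℝ) by
      rw [← Pi.single_smul', smul_eq_mul, mul_one],
    map_smul, mul_smul_comm, trace_smul, smul_eq_mul, mul_comm]

theorem neg_grad_dotProduct_self {U L : ℕ} (Lam : (Fin U → ℝ) →ₗ[ℝ] Matrix (Fin L) (Fin L) ℝ)
    {y : Fin U → ℝ} (hy : IsUnit (Lam y)) : -grad Lam y ⬝ᵥ y = L := by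
  rw [neg_grad_dotProduct, nonsing_inv_mul _ ((isUnit_iff_isUnit_det _).mp hy), trace_one,
    Fintype.card_fin]

theorem div_mul_dualNorm_le {U L : ℕ} {Lam : (Fin U → ℝ) →ₗ[ℝ] Matrix (Fin L) (Fin L) ℝ}
    (hsym : ∀ v, (Lam v).IsSymm) {k m : ℝ} (hk : 0 ≤ k) (hm : 0 ≤ m)
    (hLam : ∀ w, k ^ 2 * (w ⬝ᵥ w) ≤ (Lam w * Lam w).trace) {y : Fin U → ℝ} (hy : (Lam y).PosDef)
    (hspec : ∀ μ ∈ spectrum ℝ (Lam y), μ ≤ m) (e : Fin U → ℝ) :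
    k / m * dualNorm Lam y e ≤ √(e ⬝ᵥ e) := by
  refine mul_sqrt_dotProduct_inv_mulVec_le (by positivity) (fun w => ?_) e
  calc (k / m) ^ 2 * (w ⬝ᵥ w) = m⁻¹ ^ 2 * (k ^ 2 * (w ⬝ᵥ w)) := by ring
    _ ≤ m⁻¹ ^ 2 * (Lam w * Lam w).trace := mul_le_mul_of_nonneg_left (hLam w) (sq_nonneg _)
    _ ≤ w ⬝ᵥ hess Lam y *ᵥ w := by
      rw [dotProduct_hess_mulVec]
      exact hy.inv_sq_mul_trace_mul_self_le hm hspec (isHermitian_iff_isSymm.mpr (hsym w))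

theorem stmt15_general {U L : ℕ} (hL : 0 < L)
    (Lam : (Fin U → ℝ) →ₗ[ℝ] Matrix (Fin L) (Fin L) ℝ)
    (hsym : ∀ v, (Lam v).IsSymm)
    (e t : Fin U → ℝ) (c cstar : ℝ) (hcc : c < cstar)
    (k₁ k₂ k₃ : ℝ) (hk₁ : 0 < k₁) (hk₂ : 0 < k₂) (hk₃ : 0 < k₃)
    (h1 : ∀ v : Fin U → ℝ, (Lam v).PosSemidef → k₁ * ‖v‖ ≤ e ⬝ᵥ v)
    (h2 : ∀ w : Fin U → ℝ, k₂ ^ 2 * (w ⬝ᵥ w) ≤ (Lam w * Lam w).trace)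
    (h3 : ∀ v : Fin U → ℝ, (Lam v).PosSemidef →
      ∀ μ : ℝ, Module.End.HasEigenvalue (Matrix.mulVecLin (Lam v)) μ → μ ≤ k₃ * ‖v‖)
    (hb : ∀ v : Fin U → ℝ, (Lam v).PosSemidef → 0 ≤ (t - cstar • e) ⬝ᵥ v)
    (y : Fin U → ℝ) (hy : (Lam y).PosDef) (hgy : -grad Lam y = t - c • e) :
    (cstar - c) * k₁ * k₂ * dualNorm Lam y e ≤ k₃ * L * Real.sqrt (e ⬝ᵥ e) := by
  have hy₀ : y ≠ 0 := by
    rintro rfl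
    have : Nonempty (Fin L) := Fin.pos_iff_nonempty.mp hL
    simpa using hy.trace_pos
  set m := k₃ * ‖y‖
  have hm : 0 < m := mul_pos hk₃ (norm_pos_iff.mpr hy₀)
  have hspec : ∀ μ ∈ spectrum ℝ (Lam y), μ ≤ m := fun μ hμ =>
    h3 y hy.posSemidef μ <| Module.End.hasEigenvalue_iff_mem_spectrum.mpr <| by
      rwa [← toLin'_apply', spectrum_toLin']
  have hdual : k₂ / m * dualNorm Lam y e ≤ √(e ⬝ᵥ e) :=
    div_mul_dualNorm_le hsym hk₂.le hm.le h2 hy hspec e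
  have hgap : (cstar - c) * (k₁ * ‖y‖) ≤ L := by
    have htrace := neg_grad_dotProduct_self Lam hy.isUnit
    have hcstar := hb y hy.posSemidef
    have he := h1 y hy.posSemidef
    rw [hgy, sub_dotProduct, smul_dotProduct, smul_eq_mul] at htrace
    rw [sub_dotProduct, smul_dotProduct, smul_eq_mul] at hcstar
    nlinarith
  calc (cstar - c) * k₁ * k₂ * dualNorm Lam y e
      = (cstar - c) * k₁ * m * (k₂ / m * dualNorm Lam y e) := by field_simp
    _ ≤ (cstar - c) * k₁ * m * √(e ⬝ᵥ e) := by gcongr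
    _ = k₃ * ((cstar - c) * (k₁ * ‖y‖)) * √(e ⬝ᵥ e) := by ring
    _ ≤ k₃ * L * √(e ⬝ᵥ e) := by gcongr

/-- distance to optimality. Here `‖v‖` (the pi norm on `Fin U → ℝ`)
is the maximum norm, and `Real.sqrt (v ⬝ᵥ v)` is the Euclidean norm. -/
theorem stmt15 {U L : ℕ} (hU : 0 < U) (hL : 0 < L)
    (Lam : (Fin U → ℝ) →ₗ[ℝ] Matrix (Fin L) (Fin L) ℝ)
    (hinj : Function.Injective Lam) (hsym : ∀ v, (Lam v).IsSymm)
    (e t : Fin U → ℝ) (c cstar : ℝ) (hcc : c < cstar)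
    (k₁ k₂ k₃ : ℝ) (hk₁ : 0 < k₁) (hk₂ : 0 < k₂) (hk₃ : 0 < k₃)
    (h1 : ∀ v : Fin U → ℝ, (Lam v).PosSemidef → k₁ * ‖v‖ ≤ e ⬝ᵥ v)
    (h2 : ∀ w : Fin U → ℝ, k₂ ^ 2 * (w ⬝ᵥ w) ≤ (Lam w * Lam w).trace)
    (h3 : ∀ v : Fin U → ℝ, (Lam v).PosSemidef →
      ∀ μ : ℝ, Module.End.HasEigenvalue (Matrix.mulVecLin (Lam v)) μ → μ ≤ k₃ * ‖v‖)
    (hb : ∀ v : Fin U → ℝ, (Lam v).PosSemidef → 0 ≤ (t - cstar • e) ⬝ᵥ v)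
    (y : Fin U → ℝ) (hy : (Lam y).PosDef) (hgy : -grad Lam y = t - c • e) :
    (cstar - c) * k₁ * k₂ * dualNorm Lam y e ≤ k₃ * L * Real.sqrt (e ⬝ᵥ e) :=
  stmt15_general hL Lam hsym e t c cstar hcc k₁ k₂ k₃ hk₁ hk₂ hk₃ h1 h2 h3 hb y hy hgy
end

section
/- Let 0 < r ≤ 1/4, define ρ_r := r·(1 − 3r − 2r²)/(1 − r − 2r²), and let Σ* := {v ∈ ℝ^U : Λ(v) is positive semidefinite}. Let e, t ∈ ℝ^U and let c, c₊, c* ∈ ℝ with c < c₊ and c < c*. Suppose: Λ(x₊) and Λ(y) are positive definite; −g(y) = t − c·e; ‖x₊ − y‖_{x₊} ≤ r²/(1 − 2r); ‖x₊ − H(x₊)⁻¹·(t − c₊·e)‖_{x₊} = r/(r + 1); there are constants k₁, k₂, k₃ > 0 such that eᵀv ≥ k₁·‖v‖_∞ for every v ∈ Σ*, tr(Λ(w)·Λ(w)) ≥ k₂²·‖w‖² for every w ∈ ℝ^U, and every eigenvalue of Λ(v) is at most k₃·‖v‖_∞ for every v ∈ Σ*; and (t − c*·e)ᵀv ≥ 0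 for every v ∈ Σ*. Then (c₊ − c)·k₃·L·‖e‖ ≥ ρ_r·k₁·k₂·(c* − c); that is, the per-iteration improvement satisfies (c₊ − c)/(c* − c) ≥ ρ_r·C with C = k₁k₂/(k₃·L·‖e‖). -/
open Matrix

/-!
Write `Λ(x₊) = P²` with `P` symmetric and rescale by `T v = P⁻¹ Λ(v) P⁻¹`: then `H(x₊)` is the
Gram matrix of the trace inner product of the `T v`, so `‖v‖_{x₊} = ‖T v‖_F`. With `S = T y` the
hypothesis on `x₊ - y` reads `‖1 - S‖_F ≤ δ := r² / (1 - 2r)`. Hence `S ⪰ (1 - δ)`, that is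
`Λ(y) ⪰ (1 - δ) Λ(x₊)`, and `‖1 - S⁻¹‖_F ≤ δ / (1 - δ)`, which bounds `‖g(y) - g(x₊)‖*_{x₊}`
because `Λ(x₊)⁻¹ - Λ(y)⁻¹ = P⁻¹ (1 - S⁻¹) P⁻¹`.

Since `H(x₊) x₊ = -g(x₊)` and `-g(y) = t - c e`, the displacement in the second hypothesis is
`H(x₊)⁻¹ (g(y) - g(x₊)) + (c₊ - c) H(x₊)⁻¹ e`, so `r / (r + 1) ≤ δ / (1 - δ) + (c₊ - c) ‖e‖*_{x₊}`.
Finally `k₂ ‖e‖*_{x₊} ≤ λ_max(Λ(x₊)) ‖e‖ ≤ k₃ ‖x₊‖_∞ ‖e‖`, `(1 - δ) k₁ ‖x₊‖_∞ ≤ eᵀ y`, and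
`(c* - c) eᵀ y ≤ (t - c e)ᵀ y = -g(y)ᵀ y = L`; these combine through
`(r / (r + 1) - δ / (1 - δ)) (1 - δ) = ρ_r`.
-/

lemma dotProduct_self_nonneg {n : Type*} [Fintype n] (v : n → ℝ) : 0 ≤ v ⬝ᵥ v :=
  Finset.sum_nonneg fun i _ => mul_self_nonneg (v i)

lemma dotProduct_sq_le {n : Type*} [Fintype n] (v w : n → ℝ) :
    (v ⬝ᵥ w) ^ 2 ≤ (v ⬝ᵥ v) * (w ⬝ᵥ w) := by
  simpa [dotProduct, sq] using Finset.sum_mul_sq_le_sq_mul_sq Finset.univ v w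

namespace Matrix

variable {m n : Type*} [Fintype m] [Fintype n]

lemma trace_mul_mul_mul_mul_comm {α : Type*} [CommSemiring α] (P X Y : Matrix n n α) :
    (P * X * P * Y).trace = (P * Y * P * X).trace := by
  rw [Matrix.mul_assoc, trace_mul_comm]
  simp only [Matrix.mul_assoc]

lemma nonsing_inv_mul_mul_self_mul_nonsing_inv {α : Type*} [CommRing α] [DecidableEq n]
    {P : Matrix n n α} (hP : IsUnit P.det) : P⁻¹ * (P * P) * P⁻¹ = 1 := by
  rw [← Matrix.mul_assoc, nonsing_inv_mul _ hP, Matrix.one_mul, mul_nonsing_inv _ hP]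

lemma mul_nonsing_inv_mul_mul_nonsing_inv_mul {α : Type*} [CommRing α] [DecidableEq n]
    {P : Matrix n n α} (hP : IsUnit P.det) (M : Matrix n n α) : P * (P⁻¹ * M * P⁻¹) * P = M := by
  rw [Matrix.mul_assoc, Matrix.nonsing_inv_mul_cancel_right (A := P) _ hP,
    Matrix.mul_nonsing_inv_cancel_left (A := P) _ hP]

lemma transpose_nonsing_inv_mul_mul_nonsing_inv {α : Type*} [CommRing α] [DecidableEq n]
    {P M : Matrix n n α} (hP : Pᵀ = P) (hM : Mᵀ = M) : (P⁻¹ * M * P⁻¹)ᵀ = P⁻¹ * M * P⁻¹ := by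
  rw [transpose_mul, transpose_mul, transpose_nonsing_inv, hP, hM, Matrix.mul_assoc]

lemma dotProduct_mulVec_le_of_mulVec_le {A : Matrix n n ℝ} {c : ℝ} (hc : 0 ≤ c)
    (hA : ∀ v, (A *ᵥ v) ⬝ᵥ (A *ᵥ v) ≤ c ^ 2 * (v ⬝ᵥ v)) (v : n → ℝ) :
    v ⬝ᵥ (A *ᵥ v) ≤ c * (v ⬝ᵥ v) := by
  have h := (dotProduct_sq_le v (A *ᵥ v)).trans
    (mul_le_mul_of_nonneg_left (hA v) (dotProduct_self_nonneg v))
  exact (abs_le_of_sq_le_sq' (by nlinarith) (mul_nonneg hc (dotProduct_self_nonneg v))).2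

open scoped MatrixOrder in
lemma IsHermitian.dotProduct_mulVec_le_of_hasEigenvalue_le [DecidableEq n] {A : Matrix n n ℝ}
    (hA : A.IsHermitian) {c : ℝ}
    (hc : ∀ μ, Module.End.HasEigenvalue A.mulVecLin μ → μ ≤ c) (v : n → ℝ) :
    v ⬝ᵥ (A *ᵥ v) ≤ c * (v ⬝ᵥ v) := by
  have hle : A ≤ algebraMap ℝ _ c := le_algebraMap_of_spectrum_le (fun μ hμ => hc μ <| by
    rwa [Module.End.hasEigenvalue_iff_mem_spectrum, ← toLin'_apply', spectrum_toLin'])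
    hA.isSelfAdjoint
  have := (Matrix.le_iff.mp hle).dotProduct_mulVec_nonneg v
  rwa [star_trivial, Algebra.algebraMap_eq_smul_one, sub_mulVec, smul_mulVec, one_mulVec,
    dotProduct_sub, dotProduct_smul, smul_eq_mul, sub_nonneg] at this

lemma isUnit_of_le_dotProduct_mulVec [DecidableEq n] {S : Matrix n n ℝ} {a : ℝ} (ha : 0 < a)
    (hS : ∀ v, a * (v ⬝ᵥ v) ≤ v ⬝ᵥ (S *ᵥ v)) : IsUnit S := by
  refine mulVec_injective_iff_isUnit.mp fun v w hvw => ?_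
  have h := hS (v - w)
  rw [mulVec_sub, hvw, sub_self, dotProduct_zero] at h
  exact sub_eq_zero.mp <| dotProduct_self_eq_zero.mp <|
    le_antisymm (nonpos_of_mul_nonpos_right h ha) (dotProduct_self_nonneg _)

lemma inv_mulVec_dotProduct_self_le [DecidableEq n] {S : Matrix n n ℝ} {a : ℝ} (ha : 0 < a)
    (hS : ∀ v, a * (v ⬝ᵥ v) ≤ v ⬝ᵥ (S *ᵥ v)) (u : n → ℝ) :
    (S⁻¹ *ᵥ u) ⬝ᵥ (S⁻¹ *ᵥ u) ≤ a⁻¹ ^ 2 * (u ⬝ᵥ u) := by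
  set w := S⁻¹ *ᵥ u
  have hSw : S *ᵥ w = u := by
    rw [mulVec_mulVec, mul_nonsing_inv _ ((isUnit_of_le_dotProduct_mulVec ha hS).map detMonoidHom),
      one_mulVec]
  rw [inv_pow, ← div_eq_inv_mul, le_div_iff₀ (by positivity)]
  rcases (dotProduct_self_nonneg w).eq_or_lt with hw | hw
  · rw [← hw, zero_mul]
    exact dotProduct_self_nonneg u
  · have h : (a * (w ⬝ᵥ w)) ^ 2 ≤ (w ⬝ᵥ w) * (u ⬝ᵥ u) :=
      (pow_le_pow_left₀ (by positivity) (hSw ▸ hS w) 2).trans (dotProduct_sq_le w u)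
    nlinarith

open scoped MatrixOrder in
lemma PosDef.exists_mul_self_eq {A : Matrix n n ℝ} [DecidableEq n] (hA : A.PosDef) :
    ∃ P : Matrix n n ℝ, P * P = A ∧ Pᵀ = P ∧ IsUnit P.det := by
  refine ⟨CFC.sqrt A, CFC.sqrt_mul_sqrt_self A hA.posSemidef.nonneg, ?_, ?_⟩
  · simpa [IsHermitian, conjTranspose_eq_transpose_of_trivial] using
      (CFC.sqrt_nonneg A).posSemidef.isHermitian
  · refine Ne.isUnit fun h => hA.det_pos.ne' ?_
    rw [← CFC.sqrt_mul_sqrt_self A hA.posSemidef.nonneg, det_mul, h, zero_mul]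

section Frobenius

attribute [local instance] Matrix.frobeniusNormedAddCommGroup

lemma frobenius_norm_sq_eq_sum (A : Matrix m n ℝ) : ‖A‖ ^ 2 = ∑ i, ∑ j, A i j ^ 2 := by
  rw [frobenius_norm_def, ← Real.sqrt_eq_rpow, Real.sq_sqrt (by positivity)]
  simp

lemma trace_transpose_mul_eq_sum (A B : Matrix m n ℝ) :
    (Aᵀ * B).trace = ∑ i, ∑ j, A i j * B i j := by
  simp only [trace, diag, mul_apply, transpose_apply]
  exact Finset.sum_comm

lemma trace_transpose_mul_self (A : Matrix m n ℝ) : (Aᵀ * A).trace = ‖A‖ ^ 2 := by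
  rw [trace_transpose_mul_eq_sum, frobenius_norm_sq_eq_sum]
  simp only [sq]

lemma trace_transpose_mul_le (A B : Matrix m n ℝ) : (Aᵀ * B).trace ≤ ‖A‖ * ‖B‖ := by
  rw [trace_transpose_mul_eq_sum, ← Real.sqrt_sq (norm_nonneg A), ← Real.sqrt_sq (norm_nonneg B),
    frobenius_norm_sq_eq_sum, frobenius_norm_sq_eq_sum]
  simp only [← Finset.sum_product']
  exact Real.sum_mul_le_sqrt_mul_sqrt _ _ _

lemma mulVec_dotProduct_self_le (A : Matrix m n ℝ) (v : n → ℝ) :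
    (A *ᵥ v) ⬝ᵥ (A *ᵥ v) ≤ ‖A‖ ^ 2 * (v ⬝ᵥ v) := by
  rw [frobenius_norm_sq_eq_sum, Finset.sum_mul]
  refine Finset.sum_le_sum fun i _ => ?_
  simpa [mulVec, dotProduct, sq] using Finset.sum_mul_sq_le_sq_mul_sq Finset.univ (A i) v

lemma frobenius_norm_mul_sq_le_of_mulVec {P : Matrix m m ℝ} {c : ℝ}
    (hP : ∀ v, (P *ᵥ v) ⬝ᵥ (P *ᵥ v) ≤ c * (v ⬝ᵥ v)) (M : Matrix m n ℝ) :
    ‖P * M‖ ^ 2 ≤ c * ‖M‖ ^ 2 := by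
  have hcol : ∀ j, ∑ i, (P * M) i j ^ 2 ≤ c * ∑ i, M i j ^ 2 := fun j => by
    simpa [dotProduct, mulVec, mul_apply, sq] using hP fun k => M k j
  rw [frobenius_norm_sq_eq_sum, frobenius_norm_sq_eq_sum, Finset.sum_comm,
    Finset.sum_comm (f := fun i j => M i j ^ 2), Finset.mul_sum]
  exact Finset.sum_le_sum fun j _ => hcol j

lemma frobenius_norm_mul_mul_le_of_mulVec {P : Matrix n n ℝ} (hP : Pᵀ = P) {c : ℝ} (hc : 0 ≤ c)
    (hPc : ∀ v, (P *ᵥ v) ⬝ᵥ (P *ᵥ v) ≤ c * (v ⬝ᵥ v)) (M : Matrix n n ℝ) :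
    ‖P * M * P‖ ≤ c * ‖M‖ := by
  have hT : ‖P * M * P‖ = ‖P * (P * M)ᵀ‖ := by
    rw [← frobenius_norm_transpose, transpose_mul, hP]
  have h : ‖P * (P * M)ᵀ‖ ^ 2 ≤ (c * ‖M‖) ^ 2 := by
    have := frobenius_norm_mul_sq_le_of_mulVec hPc (P * M)ᵀ
    rw [frobenius_norm_transpose] at this
    nlinarith [frobenius_norm_mul_sq_le_of_mulVec hPc M]
  rw [hT]
  exact (pow_le_pow_iff_left₀ (norm_nonneg _) (by positivity) two_ne_zero).mp h

lemma le_dotProduct_mulVec_of_frobenius_norm_one_sub_le [DecidableEq n] {S : Matrix n n ℝ}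
    {δ : ℝ} (hS : ‖1 - S‖ ≤ δ) (v : n → ℝ) : (1 - δ) * (v ⬝ᵥ v) ≤ v ⬝ᵥ (S *ᵥ v) := by
  have h := dotProduct_mulVec_le_of_mulVec_le (norm_nonneg _) (mulVec_dotProduct_self_le (1 - S)) v
  rw [sub_mulVec, one_mulVec, dotProduct_sub] at h
  nlinarith [dotProduct_self_nonneg v]

lemma frobenius_norm_one_sub_inv_le [DecidableEq n] {S : Matrix n n ℝ} {δ : ℝ}
    (hS : ‖1 - S‖ ≤ δ) (hδ : δ < 1) : ‖1 - S⁻¹‖ ≤ δ / (1 - δ) := by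
  have hlow := le_dotProduct_mulVec_of_frobenius_norm_one_sub_le hS
  have hSdet := (isUnit_of_le_dotProduct_mulVec (sub_pos.mpr hδ) hlow).map detMonoidHom
  have h : ‖1 - S⁻¹‖ ^ 2 ≤ (δ / (1 - δ)) ^ 2 := by
    have := frobenius_norm_mul_sq_le_of_mulVec
      (inv_mulVec_dotProduct_self_le (sub_pos.mpr hδ) hlow) (S - 1)
    rw [Matrix.mul_sub, nonsing_inv_mul _ hSdet, Matrix.mul_one, norm_sub_rev S] at this
    calc ‖1 - S⁻¹‖ ^ 2 ≤ (1 - δ)⁻¹ ^ 2 * ‖1 - S‖ ^ 2 := this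
      _ ≤ (1 - δ)⁻¹ ^ 2 * δ ^ 2 := by gcongr
      _ = (δ / (1 - δ)) ^ 2 := by ring
  exact (pow_le_pow_iff_left₀ (norm_nonneg _) (div_nonneg ((norm_nonneg _).trans hS)
    (sub_pos.mpr hδ).le) two_ne_zero).mp h

end Frobenius

end Matrix

lemma rate_eq_mul_one_sub {r δ : ℝ} (hr0 : 0 < r) (hr : r ≤ 1 / 4) (hδ : δ = r ^ 2 / (1 - 2 * r)) :
    r * (1 - 3 * r - 2 * r ^ 2) / (1 - r - 2 * r ^ 2) = (r / (r + 1) - δ / (1 - δ)) * (1 - δ) := by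
  have h1 : 1 - 2 * r ≠ 0 := by linarith
  have h2 : 1 - 2 * r - r ^ 2 ≠ 0 := by nlinarith
  have h3 : 1 - r - 2 * r ^ 2 ≠ 0 := by nlinarith
  have h4 : r + 1 ≠ 0 := by linarith
  rw [hδ, one_sub_div h1, div_div_div_cancel_right₀ h1, div_sub_div _ _ h4 h2, div_mul_div_comm,
    div_eq_div_iff h3 (mul_ne_zero (mul_ne_zero h4 h2) h1)]
  ring

namespace LogDetBarrier

variable {U L : ℕ}

section

variable (Lam : (Fin U → ℝ) →ₗ[ℝ] Matrix (Fin L) (Fin L) ℝ)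

lemma sum_mul_trace_mul_single (M : Matrix (Fin L) (Fin L) ℝ) (s : Fin U → ℝ) :
    ∑ i, s i * (M * Lam (Pi.single i 1)).trace = (M * Lam s).trace := by
  conv_rhs => rw [← Finset.univ_sum_single s]
  simp only [map_sum, Matrix.mul_sum, trace_sum]
  refine Finset.sum_congr rfl fun i _ => ?_
  rw [← smul_eq_mul, ← trace_smul, ← Matrix.mul_smul, ← map_smul, ← Pi.single_smul', smul_eq_mul,
    mul_one]

lemma grad_dotProduct (x s : Fin U → ℝ) :
    grad Lam x ⬝ᵥ s = -((Lam x)⁻¹ * Lam s).trace := by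
  rw [← sum_mul_trace_mul_single, ← Finset.sum_neg_distrib]
  exact Finset.sum_congr rfl fun i _ => by simp only [grad]; ring

lemma hess_mulVec_apply (x w : Fin U → ℝ) (i : Fin U) :
    (hess Lam x *ᵥ w) i = ((Lam x)⁻¹ * Lam (Pi.single i 1) * (Lam x)⁻¹ * Lam w).trace := by
  simp only [mulVec, dotProduct, hess, of_apply]
  rw [← sum_mul_trace_mul_single]
  exact Finset.sum_congr rfl fun j _ => mul_comm _ _

lemma dotProduct_hess_mulVec (x v w : Fin U → ℝ) :
    v ⬝ᵥ (hess Lam x *ᵥ w) = ((Lam x)⁻¹ * Lam v * (Lam x)⁻¹ * Lam w).trace := by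
  calc v ⬝ᵥ (hess Lam x *ᵥ w)
      = ∑ i, v i * ((Lam x)⁻¹ * Lam w * (Lam x)⁻¹ * Lam (Pi.single i 1)).trace :=
        Finset.sum_congr rfl fun i _ => by
          rw [hess_mulVec_apply, trace_mul_mul_mul_mul_comm]
    _ = _ := by rw [sum_mul_trace_mul_single, trace_mul_mul_mul_mul_comm]

lemma hess_mulVec_self {x : Fin U → ℝ} (hx : IsUnit (Lam x).det) :
    hess Lam x *ᵥ x = -grad Lam x := by
  funext i
  rw [hess_mulVec_apply, Matrix.mul_assoc _ (Lam x)⁻¹, nonsing_inv_mul _ hx, Matrix.mul_one]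
  simp [grad]

lemma neg_grad_dotProduct_self {x : Fin U → ℝ} (hx : IsUnit (Lam x).det) :
    -grad Lam x ⬝ᵥ x = L := by
  rw [neg_dotProduct, grad_dotProduct, neg_neg, nonsing_inv_mul _ hx, trace_one, Fintype.card_fin]

lemma locNorm_smul (x : Fin U → ℝ) (a : ℝ) (v : Fin U → ℝ) :
    locNorm Lam x (a • v) = |a| * locNorm Lam x v := by
  rw [locNorm, locNorm, mulVec_smul, dotProduct_smul, smul_dotProduct, smul_eq_mul, smul_eq_mul,
    ← mul_assoc, ← sq, Real.sqrt_mul (sq_nonneg a), Real.sqrt_sq_eq_abs]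

lemma locNorm_hessInv_mulVec {x : Fin U → ℝ} (hH : IsUnit (hess Lam x).det) (t : Fin U → ℝ) :
    locNorm Lam x ((hess Lam x)⁻¹ *ᵥ t) = dualNorm Lam x t := by
  rw [locNorm, dualNorm, mulVec_mulVec, mul_nonsing_inv _ hH, one_mulVec, dotProduct_comm]

end

attribute [local instance] Matrix.frobeniusNormedAddCommGroup

variable {Lam : (Fin U → ℝ) →ₗ[ℝ] Matrix (Fin L) (Fin L) ℝ} {x : Fin U → ℝ}
  {P : Matrix (Fin L) (Fin L) ℝ}

lemma dotProduct_hess_mulVec_eq_trace_of_mul_self_eq (hP : P * P = Lam x) (v w : Fin U → ℝ) :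
    v ⬝ᵥ (hess Lam x *ᵥ w) = ((P⁻¹ * Lam v * P⁻¹) * (P⁻¹ * Lam w * P⁻¹)).trace := by
  rw [dotProduct_hess_mulVec, ← hP, Matrix.mul_inv_rev,
    show P⁻¹ * P⁻¹ * Lam v * (P⁻¹ * P⁻¹) * Lam w =
      P⁻¹ * (P⁻¹ * Lam v * P⁻¹ * (P⁻¹ * Lam w)) by simp only [Matrix.mul_assoc],
    trace_mul_comm]
  simp only [Matrix.mul_assoc]

lemma dotProduct_hess_mulVec_self_eq_norm_sq (hsym : ∀ v, (Lam v).IsSymm)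
    (hP : P * P = Lam x) (hPt : Pᵀ = P) (v : Fin U → ℝ) :
    v ⬝ᵥ (hess Lam x *ᵥ v) = ‖P⁻¹ * Lam v * P⁻¹‖ ^ 2 := by
  rw [dotProduct_hess_mulVec_eq_trace_of_mul_self_eq hP, ← trace_transpose_mul_self,
    transpose_nonsing_inv_mul_mul_nonsing_inv hPt (hsym _).eq]

lemma locNorm_eq_frobenius_norm (hsym : ∀ v, (Lam v).IsSymm) (hP : P * P = Lam x)
    (hPt : Pᵀ = P) (v : Fin U → ℝ) : locNorm Lam x v = ‖P⁻¹ * Lam v * P⁻¹‖ := by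
  rw [locNorm, dotProduct_hess_mulVec_self_eq_norm_sq hsym hP hPt,
    Real.sqrt_sq (norm_nonneg _)]

lemma locNorm_sub_eq_frobenius_norm (hsym : ∀ v, (Lam v).IsSymm) (hP : P * P = Lam x)
    (hPt : Pᵀ = P) (hPdet : IsUnit P.det) (y : Fin U → ℝ) :
    locNorm Lam x (x - y) = ‖1 - P⁻¹ * Lam y * P⁻¹‖ := by
  rw [locNorm_eq_frobenius_norm hsym hP hPt, map_sub, Matrix.mul_sub, Matrix.sub_mul,
    ← hP, nonsing_inv_mul_mul_self_mul_nonsing_inv hPdet]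

lemma hess_posDef (hinj : Function.Injective Lam) (hsym : ∀ v, (Lam v).IsSymm)
    (hx : (Lam x).PosDef) : (hess Lam x).PosDef := by
  obtain ⟨P, hP, hPt, hPdet⟩ := hx.exists_mul_self_eq
  refine PosDef.of_dotProduct_mulVec_pos ?_ fun v hv => ?_
  · ext i j
    simp only [conjTranspose_apply, star_trivial, hess, of_apply]
    exact trace_mul_mul_mul_mul_comm _ _ _
  · rw [star_trivial, dotProduct_hess_mulVec_self_eq_norm_sq hsym hP hPt]
    refine pow_pos (norm_pos_iff.mpr fun h => hv (hinj ?_)) 2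
    rw [← mul_nonsing_inv_mul_mul_nonsing_inv_mul hPdet (Lam v), h, Matrix.mul_zero,
      Matrix.zero_mul, map_zero]

lemma isUnit_det_hess (hinj : Function.Injective Lam) (hsym : ∀ v, (Lam v).IsSymm)
    (hx : (Lam x).PosDef) : IsUnit (hess Lam x).det :=
  (hess_posDef hinj hsym hx).det_pos.ne'.isUnit

lemma locNorm_add_le (hsym : ∀ v, (Lam v).IsSymm) (hx : (Lam x).PosDef) (v w : Fin U → ℝ) :
    locNorm Lam x (v + w) ≤ locNorm Lam x v + locNorm Lam x w := by
  obtain ⟨P, hP, hPt, -⟩ := hx.exists_mul_self_eq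
  simp only [locNorm_eq_frobenius_norm hsym hP hPt, map_add, Matrix.mul_add, Matrix.add_mul]
  exact norm_add_le _ _

lemma posSemidef_sub_smul_of_locNorm_sub_le (hsym : ∀ v, (Lam v).IsSymm) (hx : (Lam x).PosDef)
    {y : Fin U → ℝ} {δ : ℝ} (h : locNorm Lam x (x - y) ≤ δ) :
    (Lam (y - (1 - δ) • x)).PosSemidef := by
  obtain ⟨P, hP, hPt, hPdet⟩ := hx.exists_mul_self_eq
  set S := P⁻¹ * Lam y * P⁻¹
  rw [locNorm_sub_eq_frobenius_norm hsym hP hPt hPdet] at h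
  have hS : (S - (1 - δ) • 1).PosSemidef := by
    refine PosSemidef.of_dotProduct_mulVec_nonneg ?_ fun v => ?_
    · rw [IsHermitian, conjTranspose_eq_transpose_of_trivial, transpose_sub, transpose_smul,
        transpose_one, transpose_nonsing_inv_mul_mul_nonsing_inv hPt (hsym _).eq]
    · rw [star_trivial, sub_mulVec, smul_mulVec, one_mulVec, dotProduct_sub, dotProduct_smul,
        smul_eq_mul, sub_nonneg]
      exact le_dotProduct_mulVec_of_frobenius_norm_one_sub_le h v
  have hΛ : Lam (y - (1 - δ) • x) = Pᴴ * (S - (1 - δ) • 1) * P := by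
    rw [conjTranspose_eq_transpose_of_trivial, hPt, Matrix.mul_sub, Matrix.sub_mul,
      mul_nonsing_inv_mul_mul_nonsing_inv_mul hPdet, Matrix.mul_smul, Matrix.smul_mul,
      Matrix.mul_one, hP, map_sub, map_smul]
  rw [hΛ]
  exact hS.conjTranspose_mul_mul_same P

lemma dualNorm_grad_sub_le (hinj : Function.Injective Lam) (hsym : ∀ v, (Lam v).IsSymm)
    (hx : (Lam x).PosDef) {y : Fin U → ℝ} {δ : ℝ} (h : locNorm Lam x (x - y) ≤ δ) (hδ : δ < 1) :
    dualNorm Lam x (grad Lam y - grad Lam x) ≤ δ / (1 - δ) := by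
  obtain ⟨P, hP, hPt, hPdet⟩ := hx.exists_mul_self_eq
  have hH := isUnit_det_hess hinj hsym hx
  set S := P⁻¹ * Lam y * P⁻¹
  set s := (hess Lam x)⁻¹ *ᵥ (grad Lam y - grad Lam x)
  set T := P⁻¹ * Lam s * P⁻¹
  rw [locNorm_sub_eq_frobenius_norm hsym hP hPt hPdet] at h
  rw [← locNorm_hessInv_mulVec _ hH, locNorm_eq_frobenius_norm hsym hP hPt]
  have hSt : (1 - S⁻¹)ᵀ = 1 - S⁻¹ := by
    rw [transpose_sub, transpose_one, transpose_nonsing_inv,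
      transpose_nonsing_inv_mul_mul_nonsing_inv hPt (hsym _).eq]
  have hinv : (Lam x)⁻¹ - (Lam y)⁻¹ = P⁻¹ * (1 - S⁻¹) * P⁻¹ := by
    rw [← hP, ← mul_nonsing_inv_mul_mul_nonsing_inv_mul hPdet (Lam y)]
    simp only [Matrix.mul_inv_rev, Matrix.mul_sub, Matrix.sub_mul, Matrix.mul_one, S,
      Matrix.mul_assoc]
  have key : ‖T‖ ^ 2 ≤ ‖1 - S⁻¹‖ * ‖T‖ :=
    calc ‖T‖ ^ 2 = s ⬝ᵥ (hess Lam x *ᵥ s) :=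
          (dotProduct_hess_mulVec_self_eq_norm_sq hsym hP hPt s).symm
      _ = (grad Lam y - grad Lam x) ⬝ᵥ s := by
        rw [mulVec_mulVec, mul_nonsing_inv _ hH, one_mulVec, dotProduct_comm]
      _ = (((Lam x)⁻¹ - (Lam y)⁻¹) * Lam s).trace := by
        rw [sub_dotProduct, grad_dotProduct, grad_dotProduct, Matrix.sub_mul, trace_sub]
        ring
      _ = ((1 - S⁻¹)ᵀ * T).trace := by
        rw [hinv, hSt]
        simp only [Matrix.mul_assoc]
        rw [trace_mul_comm]
        simp only [T, Matrix.mul_assoc]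
      _ ≤ ‖1 - S⁻¹‖ * ‖T‖ := trace_transpose_mul_le _ _
  have hT : ‖T‖ ≤ ‖1 - S⁻¹‖ := by nlinarith [norm_nonneg T, norm_nonneg (1 - S⁻¹)]
  exact hT.trans (frobenius_norm_one_sub_inv_le h hδ)

lemma mul_dualNorm_le (hinj : Function.Injective Lam) (hsym : ∀ v, (Lam v).IsSymm)
    (hx : (Lam x).PosDef) {Θ : ℝ} (hΘ : 0 ≤ Θ)
    (heig : ∀ μ, Module.End.HasEigenvalue (Lam x).mulVecLin μ → μ ≤ Θ) {k : ℝ} (hk : 0 ≤ k)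
    (hcoer : ∀ w, k ^ 2 * (w ⬝ᵥ w) ≤ (Lam w * Lam w).trace) (e : Fin U → ℝ) :
    k * dualNorm Lam x e ≤ Θ * √(e ⬝ᵥ e) := by
  obtain ⟨P, hP, hPt, hPdet⟩ := hx.exists_mul_self_eq
  have hH := isUnit_det_hess hinj hsym hx
  set s := (hess Lam x)⁻¹ *ᵥ e
  set m := dualNorm Lam x e with hm_def
  have hm : m = ‖P⁻¹ * Lam s * P⁻¹‖ := by
    rw [hm_def, ← locNorm_hessInv_mulVec _ hH, locNorm_eq_frobenius_norm hsym hP hPt]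
  have hm2 : m ^ 2 = e ⬝ᵥ s := by
    rw [hm, ← dotProduct_hess_mulVec_self_eq_norm_sq hsym hP hPt, mulVec_mulVec,
      mul_nonsing_inv _ hH, one_mulVec, dotProduct_comm]
  have hPΘ : ∀ v, (P *ᵥ v) ⬝ᵥ (P *ᵥ v) ≤ Θ * (v ⬝ᵥ v) := fun v => by
    rw [dotProduct_mulVec, ← mulVec_transpose, hPt, mulVec_mulVec, hP, dotProduct_comm]
    exact hx.isHermitian.dotProduct_mulVec_le_of_hasEigenvalue_le heig v
  have hΛ : ‖Lam s‖ ≤ Θ * m := by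
    have := frobenius_norm_mul_mul_le_of_mulVec hPt hΘ hPΘ (P⁻¹ * Lam s * P⁻¹)
    rwa [mul_nonsing_inv_mul_mul_nonsing_inv_mul hPdet, ← hm] at this
  have hs : k ^ 2 * (s ⬝ᵥ s) ≤ (Θ * m) ^ 2 := by
    have htr : (Lam s * Lam s).trace = ‖Lam s‖ ^ 2 := by
      rw [← trace_transpose_mul_self, (hsym s).eq]
    exact (hcoer s).trans (htr ▸ pow_le_pow_left₀ (norm_nonneg _) hΛ 2)
  rcases (hm ▸ norm_nonneg _ : 0 ≤ m).eq_or_lt with h0 | hpos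
  · rw [← h0, mul_zero]
    positivity
  · refine (pow_le_pow_iff_left₀ (by positivity) (by positivity) two_ne_zero).mp ?_
    have hes := dotProduct_sq_le e s
    rw [← hm2] at hes
    rw [mul_pow, mul_pow, Real.sq_sqrt (dotProduct_self_nonneg e)]
    have : k ^ 2 * m ^ 2 * m ^ 2 ≤ Θ ^ 2 * (e ⬝ᵥ e) * m ^ 2 := by
      nlinarith [mul_le_mul_of_nonneg_left hes (sq_nonneg k),
        mul_le_mul_of_nonneg_left hs (dotProduct_self_nonneg e)]
    exact le_of_mul_le_mul_right this (by positivity)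

lemma locNorm_newton_step_le (hinj : Function.Injective Lam) (hsym : ∀ v, (Lam v).IsSymm)
    (hx : (Lam x).PosDef) {y e t : Fin U → ℝ} {c c' : ℝ} (hgy : -grad Lam y = t - c • e)
    (hc : c ≤ c') :
    locNorm Lam x (x - (hess Lam x)⁻¹ *ᵥ (t - c' • e)) ≤
      dualNorm Lam x (grad Lam y - grad Lam x) + (c' - c) * dualNorm Lam x e := by
  have hH := isUnit_det_hess hinj hsym hx
  have hsplit : x - (hess Lam x)⁻¹ *ᵥ (t - c' • e) =
      (hess Lam x)⁻¹ *ᵥ (grad Lam y - grad Lam x) + (c' - c) • (hess Lam x)⁻¹ *ᵥ e := by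
    have ht : t = -grad Lam y + c • e := by rw [hgy, sub_add_cancel]
    calc x - (hess Lam x)⁻¹ *ᵥ (t - c' • e)
        = (hess Lam x)⁻¹ *ᵥ (hess Lam x *ᵥ x) - (hess Lam x)⁻¹ *ᵥ (t - c' • e) := by
          rw [mulVec_mulVec, nonsing_inv_mul _ hH, one_mulVec]
      _ = _ := by
          rw [hess_mulVec_self Lam hx.det_pos.ne'.isUnit, ← mulVec_smul, ← mulVec_sub,
            ← mulVec_add, ht]
          congr 1
          module
  rw [hsplit]
  calc _ ≤ _ := locNorm_add_le hsym hx _ _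
    _ = _ := by
      rw [locNorm_smul, abs_of_nonneg (sub_nonneg.mpr hc), locNorm_hessInv_mulVec _ hH,
        locNorm_hessInv_mulVec _ hH]

lemma mul_dotProduct_le_of_neg_grad_eq {y e t : Fin U → ℝ} {c c' : ℝ} (hy : IsUnit (Lam y).det)
    (hgy : -grad Lam y = t - c • e) (hdual : 0 ≤ (t - c' • e) ⬝ᵥ y) :
    (c' - c) * (e ⬝ᵥ y) ≤ L := by
  have hL := neg_grad_dotProduct_self Lam hy
  rw [hgy] at hL
  simp only [sub_dotProduct, smul_dotProduct, smul_eq_mul] at hL hdual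
  linarith

end LogDetBarrier

open LogDetBarrier in
theorem stmt16_general {U L : ℕ}
    (Lam : (Fin U → ℝ) →ₗ[ℝ] Matrix (Fin L) (Fin L) ℝ)
    (hinj : Function.Injective Lam) (hsym : ∀ v, (Lam v).IsSymm)
    (r : ℝ) (hr0 : 0 < r) (hr : r ≤ 1 / 4)
    (ρ : ℝ) (hρ : ρ = r * (1 - 3 * r - 2 * r ^ 2) / (1 - r - 2 * r ^ 2))
    (e t : Fin U → ℝ) (c cp cstar : ℝ) (hccp : c < cp) (hcc : c < cstar)
    (xp y : Fin U → ℝ) (hxp : (Lam xp).PosDef) (hy : (Lam y).PosDef)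
    (hgy : -grad Lam y = t - c • e)
    (h1 : locNorm Lam xp (xp - y) ≤ r ^ 2 / (1 - 2 * r))
    (h2 : locNorm Lam xp (xp - (hess Lam xp)⁻¹.mulVec (t - cp • e)) = r / (r + 1))
    (k₁ k₂ k₃ : ℝ) (hk₁ : 0 < k₁) (hk₂ : 0 < k₂) (hk₃ : 0 < k₃)
    (hc1 : ∀ v : Fin U → ℝ, (Lam v).PosSemidef → k₁ * ‖v‖ ≤ e ⬝ᵥ v)
    (hc2 : ∀ w : Fin U → ℝ, k₂ ^ 2 * (w ⬝ᵥ w) ≤ (Lam w * Lam w).trace)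
    (hc3 : ∀ v : Fin U → ℝ, (Lam v).PosSemidef →
      ∀ μ : ℝ, Module.End.HasEigenvalue (Matrix.mulVecLin (Lam v)) μ → μ ≤ k₃ * ‖v‖)
    (hb : ∀ v : Fin U → ℝ, (Lam v).PosSemidef → 0 ≤ (t - cstar • e) ⬝ᵥ v) :
    ρ * k₁ * k₂ * (cstar - c) ≤ (cp - c) * k₃ * L * Real.sqrt (e ⬝ᵥ e) := by
  set δ := r ^ 2 / (1 - 2 * r) with hδ
  have hδ1 : δ < 1 := by rw [hδ, div_lt_one (by linarith)]; nlinarith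
  have hstep : r / (r + 1) - δ / (1 - δ) ≤ (cp - c) * dualNorm Lam xp e := by
    have := locNorm_newton_step_le hinj hsym hxp hgy hccp.le
    rw [h2] at this
    linarith [dualNorm_grad_sub_le hinj hsym hxp h1 hδ1]
  have hdual : k₂ * dualNorm Lam xp e ≤ k₃ * ‖xp‖ * √(e ⬝ᵥ e) :=
    mul_dualNorm_le hinj hsym hxp (by positivity) (hc3 xp hxp.posSemidef) hk₂.le hc2 e
  have hey : (1 - δ) * (k₁ * ‖xp‖) ≤ e ⬝ᵥ y := by
    have := hc1 _ (posSemidef_sub_smul_of_locNorm_sub_le hsym hxp h1)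
    rw [dotProduct_sub, dotProduct_smul, smul_eq_mul] at this
    nlinarith [hc1 xp hxp.posSemidef, norm_nonneg (y - (1 - δ) • xp)]
  have hgap := mul_dotProduct_le_of_neg_grad_eq hy.det_pos.ne'.isUnit hgy (hb y hy.posSemidef)
  have hc' : 0 ≤ cp - c := by linarith
  rw [hρ, rate_eq_mul_one_sub hr0 hr hδ]
  calc (r / (r + 1) - δ / (1 - δ)) * (1 - δ) * k₁ * k₂ * (cstar - c)
      ≤ (cp - c) * dualNorm Lam xp e * (1 - δ) * k₁ * k₂ * (cstar - c) := by
        gcongr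
    _ = (cp - c) * (cstar - c) * ((1 - δ) * k₁) * (k₂ * dualNorm Lam xp e) := by ring
    _ ≤ (cp - c) * (cstar - c) * ((1 - δ) * k₁) * (k₃ * ‖xp‖ * √(e ⬝ᵥ e)) := by gcongr
    _ = (cp - c) * k₃ * √(e ⬝ᵥ e) * ((cstar - c) * ((1 - δ) * (k₁ * ‖xp‖))) := by ring
    _ ≤ (cp - c) * k₃ * √(e ⬝ᵥ e) * ((cstar - c) * (e ⬝ᵥ y)) := by gcongr
    _ ≤ (cp - c) * k₃ * √(e ⬝ᵥ e) * L := by gcongr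
    _ = (cp - c) * k₃ * L * √(e ⬝ᵥ e) := by ring

/-- linear convergence: the per-iteration improvement satisfies
`(c₊ − c)/(c* − c) ≥ ρ_r·C` with `C = k₁k₂/(k₃·L·‖e‖)`. Here `‖v‖` (the pi norm
on `Fin U → ℝ`) is the maximum norm and `Real.sqrt (e ⬝ᵥ e)` the Euclidean norm. -/
theorem stmt16 {U L : ℕ} (hU : 0 < U) (hL : 0 < L)
    (Lam : (Fin U → ℝ) →ₗ[ℝ] Matrix (Fin L) (Fin L) ℝ)
    (hinj : Function.Injective Lam) (hsym : ∀ v, (Lam v).IsSymm)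
    (r : ℝ) (hr0 : 0 < r) (hr : r ≤ 1 / 4)
    (ρ : ℝ) (hρ : ρ = r * (1 - 3 * r - 2 * r ^ 2) / (1 - r - 2 * r ^ 2))
    (e t : Fin U → ℝ) (c cp cstar : ℝ) (hccp : c < cp) (hcc : c < cstar)
    (xp y : Fin U → ℝ) (hxp : (Lam xp).PosDef) (hy : (Lam y).PosDef)
    (hgy : -grad Lam y = t - c • e)
    (h1 : locNorm Lam xp (xp - y) ≤ r ^ 2 / (1 - 2 * r))
    (h2 : locNorm Lam xp (xp - (hess Lam xp)⁻¹.mulVec (t - cp • e)) = r / (r + 1))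
    (k₁ k₂ k₃ : ℝ) (hk₁ : 0 < k₁) (hk₂ : 0 < k₂) (hk₃ : 0 < k₃)
    (hc1 : ∀ v : Fin U → ℝ, (Lam v).PosSemidef → k₁ * ‖v‖ ≤ e ⬝ᵥ v)
    (hc2 : ∀ w : Fin U → ℝ, k₂ ^ 2 * (w ⬝ᵥ w) ≤ (Lam w * Lam w).trace)
    (hc3 : ∀ v : Fin U → ℝ, (Lam v).PosSemidef →
      ∀ μ : ℝ, Module.End.HasEigenvalue (Matrix.mulVecLin (Lam v)) μ → μ ≤ k₃ * ‖v‖)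
    (hb : ∀ v : Fin U → ℝ, (Lam v).PosSemidef → 0 ≤ (t - cstar • e) ⬝ᵥ v) :
    ρ * k₁ * k₂ * (cstar - c) ≤ (cp - c) * k₃ * L * Real.sqrt (e ⬝ᵥ e) :=
  stmt16_general Lam hinj hsym r hr0 hr ρ hρ e t c cp cstar hccp hcc xp y hxp hy hgy h1 h2 k₁ k₂ k₃
    hk₁ hk₂ hk₃ hc1 hc2 hc3 hb
end
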